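/- Let W ∈ ℝ^{m×m} be symmetric with W𝟙 = 𝟙, such that the eigenvalue 1 of W has algebraic multiplicity one and every other eigenvalue of W has modulus strictly less than 1. Fix i ∈ {1, …, m}. Then every x ∈ ℝ^m satisfying e_i^T W^j x = 0 for all j = 0, 1, …, m−1 also satisfies 𝟙^T x = 0. -/

import Mathlib

/-!
Let `q = χ_W / (X - 1)`. As `1` is a simple root of `χ_W`, `q(1) ≠ 0` and `deg q = m - 1`, so
the hypothesis says exactly that `y = q(W) x` has `y_i = 0`. By Cayley–Hamilton `y` lies in the
`1`-eigenspace, which is the line through `𝟙` since geometric multiplicity is bounded by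
algebraic multiplicity; hence `y = 0`. As `W` is symmetric, `𝟙` is also a left eigenvector, so
`0 = 𝟙ᵀ q(W) x = q(1) 𝟙ᵀ x`.
-/

open Matrix Polynomial

namespace Matrix

variable {K n : Type*} [Field K] [Fintype n] [DecidableEq n]

theorem exists_eq_smul_of_rootMultiplicity_charpoly_le_one {A : Matrix n n K} {a : K}
    (ha : A.charpoly.rootMultiplicity a ≤ 1) {v y : n → K} (hv0 : v ≠ 0)
    (hv : A *ᵥ v = a • v) (hy : A *ᵥ y = a • y) : ∃ c : K, y = c • v := by
  set E := Module.End.eigenspace A.toLin' a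
  have hvE : v ∈ E := Module.End.mem_eigenspace_iff.mpr (by simpa using hv)
  have hyE : y ∈ E := Module.End.mem_eigenspace_iff.mpr (by simpa using hy)
  have hle : Module.finrank K E ≤ 1 :=
    (LinearMap.finrank_eigenspace_le A.toLin' a).trans (by rwa [charpoly_toLin'])
  have hpos : 0 < Module.finrank K E :=
    Module.finrank_pos_iff_exists_ne_zero.mpr ⟨⟨v, hvE⟩, by simpa using hv0⟩
  obtain ⟨c, hc⟩ := (finrank_eq_one_iff_of_nonzero' (⟨v, hvE⟩ : E) (by simpa using hv0)).mp
    (le_antisymm hle hpos) ⟨y, hyE⟩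
  exact ⟨c, by simpa using congrArg Subtype.val hc.symm⟩

theorem vecMul_aeval_of_vecMul_eq_smul {R : Type*} [CommRing R] {A : Matrix n n R} {a : R}
    {w : n → R} (hw : w ᵥ* A = a • w) (p : R[X]) : w ᵥ* aeval A p = p.eval a • w := by
  induction p using Polynomial.induction_on with
  | C c => simp [Algebra.algebraMap_eq_smul_one, vecMul_smul]
  | add p q hp hq => simp [vecMul_add, hp, hq, add_smul]
  | monomial k c ih =>
    simp only [map_mul, aeval_C, aeval_X_pow, eval_mul, eval_C, eval_X_pow] at ih ⊢
    rw [pow_succ, ← mul_assoc, ← vecMul_vecMul, ih, smul_vecMul, hw, smul_smul, pow_succ,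
      mul_assoc]

theorem aeval_mulVec_apply_eq_zero {R : Type*} [CommRing R] {A : Matrix n n R} {x : n → R}
    {i : n} {N : ℕ} (hx : ∀ j < N, (A ^ j *ᵥ x) i = 0) {p : R[X]} (hp : p.natDegree < N) :
    (aeval A p *ᵥ x) i = 0 := by
  rw [aeval_eq_sum_range' hp, sum_mulVec, Finset.sum_apply]
  refine Finset.sum_eq_zero fun j hj => ?_
  rw [smul_mulVec, Pi.smul_apply, hx j (Finset.mem_range.mp hj), smul_zero]

theorem dotProduct_eq_zero_of_forall_pow_mulVec_apply_eq_zero {A : Matrix n n K} {a : K}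
    (ha : A.charpoly.rootMultiplicity a = 1) {v w x : n → K} {i : n}
    (hv : A *ᵥ v = a • v) (hvi : v i ≠ 0) (hw : w ᵥ* A = a • w)
    (hx : ∀ j < Fintype.card n, (A ^ j *ᵥ x) i = 0) : w ⬝ᵥ x = 0 := by
  set q := A.charpoly /ₘ (X - C a)
  have hfac : (X - C a) * q = A.charpoly := by
    simpa [ha] using pow_mul_divByMonic_rootMultiplicity_eq A.charpoly a
  have hqa : q.eval a ≠ 0 := by
    simpa [ha] using eval_divByMonic_pow_rootMultiplicity_ne_zero a A.charpoly_monic.ne_zero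
  have hdeg : q.natDegree < Fintype.card n := by
    have hq0 : q ≠ 0 := fun h => hqa (by simp [h])
    have := congrArg natDegree hfac
    rw [natDegree_mul (X_sub_C_ne_zero a) hq0, natDegree_X_sub_C, charpoly_natDegree_eq_dim]
      at this
    omega
  set y := aeval A q *ᵥ x
  have hAq : A * aeval A q = a • aeval A q := by
    have := congrArg (aeval A) hfac
    rwa [aeval_self_charpoly, map_mul, map_sub, aeval_X, aeval_C, sub_mul, sub_eq_zero,
      ← Algebra.smul_def] at this
  have hy : A *ᵥ y = a • y := by
    rw [mulVec_mulVec, hAq, smul_mulVec]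
  obtain ⟨c, hc⟩ := exists_eq_smul_of_rootMultiplicity_charpoly_le_one ha.le
    (fun h => hvi (by simp [h])) hv hy
  have hy0 : y = 0 := by
    have hyi : y i = 0 := aeval_mulVec_apply_eq_zero hx hdeg
    rw [hc, Pi.smul_apply, smul_eq_mul, mul_eq_zero] at hyi
    rw [hc, hyi.resolve_right hvi, zero_smul]
  have key : w ⬝ᵥ y = q.eval a * (w ⬝ᵥ x) := by
    rw [dotProduct_mulVec, vecMul_aeval_of_vecMul_eq_smul hw, smul_dotProduct, smul_eq_mul]
  rw [hy0, dotProduct_zero] at key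
  exact (mul_eq_zero.mp key.symm).resolve_left hqa

end Matrix

theorem stmt3 (m : ℕ) (W : Matrix (Fin m) (Fin m) ℝ)
    (hsym : W.IsSymm)
    (hones : W.mulVec (fun _ => 1) = fun _ => 1)
    (halg : (Matrix.charpoly W).rootMultiplicity 1 = 1)
    (i : Fin m) (x : Fin m → ℝ)
    (hx : ∀ j : ℕ, j < m → ((W ^ j).mulVec x) i = 0) :
    ∑ k, x k = 0 := by
  have hright : W *ᵥ (fun _ => 1) = (1 : ℝ) • fun _ => 1 := by rw [hones, one_smul]
  have hleft : (fun _ => 1) ᵥ* W = (1 : ℝ) • fun _ => 1 := by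
    rw [← hsym.eq, vecMul_transpose, hright]
  simpa [dotProduct] using dotProduct_eq_zero_of_forall_pow_mulVec_apply_eq_zero halg hright
    one_ne_zero hleft (by simpa using hx)
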